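/- Cut elimination on MLL proof structures is terminating: the rewriting relation generated by the axiom-cut reduction and the tensor/par cut reduction admits no infinite reduction sequence. -/

import Mathlib

inductive MLL where
  | atom : ℕ → MLL
  | natom : ℕ → MLL
  | tensor : MLL → MLL → MLL
  | parr : MLL → MLL → MLL
deriving DecidableEq

def MLL.neg : MLL → MLL
  | .atom a => .natom a
  | .natom a => .atom a
  | .tensor F G => .parr G.neg F.neg
  | .parr F G => .tensor G.neg F.neg

/-- Links of an MLL proof structure: an axiom link with conclusions `F, F^⊥`,
a tensor link with premises `F, G` and conclusion `F ⊗ G`, a par link with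
premises `F, G` and conclusion `F ⅋ G`, and a cut link on `F, F^⊥`. -/
inductive Link where
  | axL : MLL → Link
  | tensorL : MLL → MLL → Link
  | parL : MLL → MLL → Link
  | cutL : MLL → Link
deriving DecidableEq

/-- A proof structure, presented as its multiset of links. -/
abbrev PStruct := Multiset Link

/-- Axiom-cut reduction: a cut against an axiom link disappears. -/
inductive RedAx : PStruct → PStruct → Prop
  | step : ∀ (S : PStruct) (A : MLL),
      RedAx (Link.axL A ::ₘ Link.cutL A ::ₘ S) S

/-- Multiplicative (tensor/par) cut reduction: a cut between `A ⊗ B` and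
`B^⊥ ⅋ A^⊥` is replaced by two cuts, on `A` and on `B`. -/
inductive RedMult : PStruct → PStruct → Prop
  | step : ∀ (S : PStruct) (A B : MLL),
      RedMult
        (Link.tensorL A B ::ₘ Link.parL B.neg A.neg ::ₘ Link.cutL (MLL.tensor A B) ::ₘ S)
        (Link.cutL A ::ₘ Link.cutL B ::ₘ S)

/-- The cut-reduction relation on MLL proof structures. -/
def Red (R R' : PStruct) : Prop := RedAx R R' ∨ RedMult R R'

/-- Cut elimination on MLL proof structures is terminating: there is no
infinite sequence of cut-reduction steps. -/
theorem Red.terminating :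
    ∀ f : ℕ → PStruct, ¬ (∀ n, Red (f n) (f (n + 1))) := by
  have hax : ∀ a b, RedAx a b → Multiset.card b < Multiset.card a := by
    rintro a b ⟨S, A⟩; simp
  have hm : ∀ a b, RedMult a b → Multiset.card b < Multiset.card a := by
    rintro a b ⟨S, A, B⟩; simp
  intro f h
  have key : ∀ n, Multiset.card (f (n + 1)) < Multiset.card (f n) := fun n =>
    (h n).elim (hax _ _) (hm _ _)
  have bound : ∀ n, Multiset.card (f n) + n ≤ Multiset.card (f 0) := by
    intro n
    induction n with
    | zero => simp
    | succ k ih => have := key k; omega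
  have := bound (Multiset.card (f 0) + 1)
  omega
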